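/- arXiv:1402.7157 — 3 statements merged into one kernel-verified Lean document; each statement's English description precedes it below -/
import Mathlib

section
/- Let D ⊆ ℝⁿ (n ≥ 2) be open, let w : D → ℝ be C² with Δw = 0 and ∇w(x) ≠ 0 for all x ∈ D, let f : ℝ → ℝ be C² with f'(t) > 0 for all t, and let F : [0,∞) → ℝ be C² with F'(t) > 0 and F''(t) > 0 for t > 0; set H(t) = F'(t)/t for t > 0. Then at every point of D one has the identity div(H(|∇(f∘w)|) ∇(f∘w)) = H(f'(w)|∇w|) f''(w) |∇w|² + (H'(f'(w)|∇w|)/(f'(w)|∇w|)) · [ (f'(w))³ Δ_∞ w + (f'(w))² f''(w) |∇w|⁴ ]. -/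
/-!
Where `w` is differentiable, `∇(f ∘ w) = f'(w) ∇w`, and `f' > 0` turns `|∇(f ∘ w)|` into
`f'(w) |∇w|`; so the field is `ψ ∇w` with the scalar `ψ = H(f'(w) |∇w|) f'(w)`, and
`div (ψ ∇w) = ψ Δw + ⟨∇ψ, ∇w⟩ = ⟨∇ψ, ∇w⟩`. The chain rule for `⟨∇ψ, ∇w⟩` leaves the terms
`⟨∇(f' ∘ w), ∇w⟩ = f''(w) |∇w|²` and `⟨∇|∇w|, ∇w⟩ = ⟨∇w, D²w ∇w⟩ / |∇w| = Δ_∞ w / |∇w|`.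
-/

open Set Filter MeasureTheory
open scoped RealInnerProductSpace Topology
noncomputable section

/-- The Laplacian of a scalar function on `ℝⁿ`, as sum of pure second derivatives. -/
def laplacian {n : ℕ} (u : EuclideanSpace ℝ (Fin n) → ℝ) (x : EuclideanSpace ℝ (Fin n)) : ℝ :=
  ∑ i, fderiv ℝ (fun y => fderiv ℝ u y (EuclideanSpace.single i 1)) x (EuclideanSpace.single i 1)

/-- The divergence of a vector field on `ℝⁿ`. -/
def divergence {n : ℕ} (X : EuclideanSpace ℝ (Fin n) → EuclideanSpace ℝ (Fin n))
    (x : EuclideanSpace ℝ (Fin n)) : ℝ :=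
  ∑ i, fderiv ℝ X x (EuclideanSpace.single i 1) i

/-- The `∞`-Laplacian `Δ_∞ u = ⟨∇u, (D²u) ∇u⟩`. -/
def inftyLaplacian {n : ℕ} (u : EuclideanSpace ℝ (Fin n) → ℝ)
    (x : EuclideanSpace ℝ (Fin n)) : ℝ :=
  ⟪gradient u x, fderiv ℝ (gradient u) x (gradient u x)⟫

/-- `H(t) = F'(t)/t`. -/
def Hfun (F : ℝ → ℝ) : ℝ → ℝ := fun t => deriv F t / t

section Calculus

variable {E G : Type*} [NormedAddCommGroup E] [InnerProductSpace ℝ E]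
  [NormedAddCommGroup G] [NormedSpace ℝ G]

theorem HasFDerivAt.norm {f : G → E} {f' : G →L[ℝ] E} {x : G} (hf : HasFDerivAt f f' x)
    (h0 : f x ≠ 0) :
    HasFDerivAt (fun y => ‖f y‖) (‖f x‖⁻¹ • (innerSL ℝ (f x)).comp f') x := by
  have hsqrt := hf.norm_sq.sqrt (by positivity)
  simp only [Real.sqrt_sq (norm_nonneg _)] at hsqrt
  convert hsqrt using 1
  ext h
  simp
  ring

variable [CompleteSpace E]

theorem gradient_comp_of_differentiableAt {f : ℝ → ℝ} {u : E → ℝ} {x : E}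
    (hf : DifferentiableAt ℝ f (u x)) (hu : DifferentiableAt ℝ u x) :
    gradient (f ∘ u) x = deriv f (u x) • gradient u x := by
  rw [gradient, (hf.hasDerivAt.comp_hasFDerivAt x hu.hasFDerivAt).fderiv, map_smul]
  rfl

theorem ContDiffAt.differentiableAt_gradient {u : E → ℝ} {x : E} (hu : ContDiffAt ℝ 2 u x) :
    DifferentiableAt ℝ (gradient u) x :=
  ((InnerProductSpace.toDual ℝ E).symm.contDiff.contDiffAt.comp x
    (hu.fderiv_right (m := 1) le_rfl)).differentiableAt one_ne_zero

end Calculus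

theorem differentiableAt_Hfun {F : ℝ → ℝ} {t : ℝ} (hF : ContDiffAt ℝ 2 F t) (ht : t ≠ 0) :
    DifferentiableAt ℝ (Hfun F) t := by
  have hF' : ContDiffAt ℝ 1 (deriv F) t :=
    (hF.fderiv_right (m := 1) le_rfl).clm_apply contDiffAt_const
  exact (hF'.differentiableAt one_ne_zero).div differentiableAt_id ht

section Euclidean

variable {n : ℕ} {u : EuclideanSpace ℝ (Fin n) → ℝ} {x : EuclideanSpace ℝ (Fin n)}

theorem EuclideanSpace.sum_apply_single_mul (ℓ : EuclideanSpace ℝ (Fin n) →L[ℝ] ℝ)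
    (v : EuclideanSpace ℝ (Fin n)) :
    ∑ i, ℓ (EuclideanSpace.single i 1) * v i = ℓ v := by
  conv_rhs => rw [← (EuclideanSpace.basisFun (Fin n) ℝ).sum_repr v]
  simp [mul_comm]

theorem Filter.EventuallyEq.divergence_eq
    {X Y : EuclideanSpace ℝ (Fin n) → EuclideanSpace ℝ (Fin n)} (h : X =ᶠ[𝓝 x] Y) : divergence X x = divergence Y x := by
  simp only [divergence, h.fderiv_eq]

theorem divergence_smul {φ : EuclideanSpace ℝ (Fin n) → ℝ}
    {X : EuclideanSpace ℝ (Fin n) → EuclideanSpace ℝ (Fin n)}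
    (hφ : DifferentiableAt ℝ φ x) (hX : DifferentiableAt ℝ X x) :
    divergence (fun y => φ y • X y) x = φ x * divergence X x + fderiv ℝ φ x (X x) := by
  simp [divergence, fderiv_fun_smul hφ hX, Finset.sum_add_distrib, Finset.mul_sum,
    EuclideanSpace.sum_apply_single_mul]

theorem divergence_gradient (hu : DifferentiableAt ℝ (gradient u) x) : divergence (gradient u) x = laplacian u x := by
  refine Finset.sum_congr rfl fun i _ => ?_
  have hcoord : (fun y => fderiv ℝ u y (EuclideanSpace.single i 1)) =
      EuclideanSpace.proj i ∘ gradient u := by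
    ext y
    simp [← inner_gradient_left, EuclideanSpace.inner_single_right]
  rw [hcoord, ((EuclideanSpace.proj i).hasFDerivAt.comp x hu.hasFDerivAt).fderiv]
  rfl


theorem fderiv_comp_apply_gradient {g : ℝ → ℝ} (hg : DifferentiableAt ℝ g (u x))
    (hu : DifferentiableAt ℝ u x) :
    fderiv ℝ (g ∘ u) x (gradient u x) = deriv g (u x) * ‖gradient u x‖ ^ 2 := by
  rw [(hg.hasDerivAt.comp_hasFDerivAt x hu.hasFDerivAt).fderiv]
  simp [← inner_gradient_left]

theorem fderiv_norm_gradient_apply_gradient (hu : DifferentiableAt ℝ (gradient u) x)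
    (h0 : gradient u x ≠ 0) :
    fderiv ℝ (fun y => ‖gradient u y‖) x (gradient u x) =
      inftyLaplacian u x / ‖gradient u x‖ := by
  rw [(hu.hasFDerivAt.norm h0).fderiv]
  simp [inftyLaplacian, div_eq_inv_mul]

theorem divergence_comp_mul_norm_gradient_mul_smul_gradient {g G : ℝ → ℝ}
    (hu : ContDiffAt ℝ 2 u x) (h0 : gradient u x ≠ 0) (hg : DifferentiableAt ℝ g (u x))
    (hG : DifferentiableAt ℝ G (g (u x) * ‖gradient u x‖)) :
    divergence (fun y => (G (g (u y) * ‖gradient u y‖) * g (u y)) • gradient u y) x =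
      G (g (u x) * ‖gradient u x‖) * g (u x) * laplacian u x +
        G (g (u x) * ‖gradient u x‖) * deriv g (u x) * ‖gradient u x‖ ^ 2 +
        deriv G (g (u x) * ‖gradient u x‖) * g (u x) *
          (deriv g (u x) * ‖gradient u x‖ ^ 3 + g (u x) * inftyLaplacian u x / ‖gradient u x‖) := by
  have hgu : DifferentiableAt ℝ (g ∘ u) x := hg.comp x (hu.differentiableAt two_ne_zero)
  have hprod : HasFDerivAt (fun y => g (u y) * ‖gradient u y‖) _ x :=
    hgu.hasFDerivAt.mul (hu.differentiableAt_gradient.norm ℝ h0).hasFDerivAt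
  have hψ : HasFDerivAt (fun y => G (g (u y) * ‖gradient u y‖) * g (u y)) _ x :=
    (hG.hasDerivAt.comp_hasFDerivAt x hprod).mul hgu.hasFDerivAt
  rw [divergence_smul hψ.differentiableAt hu.differentiableAt_gradient,
    divergence_gradient hu.differentiableAt_gradient, hψ.fderiv]
  simp only [add_apply, smul_apply, smul_eq_mul, Function.comp_apply,
    fderiv_comp_apply_gradient hg (hu.differentiableAt two_ne_zero),
    fderiv_norm_gradient_apply_gradient hu.differentiableAt_gradient h0]
  field_simp
  ring

end Euclidean

theorem statement0_general {n : ℕ}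
    (D : Set (EuclideanSpace ℝ (Fin n))) (hD : IsOpen D)
    (w : EuclideanSpace ℝ (Fin n) → ℝ) (hw : ContDiffOn ℝ 2 w D)
    (hharm : ∀ x ∈ D, laplacian w x = 0)
    (hgrad : ∀ x ∈ D, gradient w x ≠ 0)
    (f : ℝ → ℝ) (hf : ContDiff ℝ 2 f) (hf' : ∀ t : ℝ, 0 < deriv f t)
    (F : ℝ → ℝ) (hF : ContDiffOn ℝ 2 F (Ici 0)) :
    ∀ x ∈ D,
      divergence (fun y => Hfun F ‖gradient (f ∘ w) y‖ • gradient (f ∘ w) y) x =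
        Hfun F (deriv f (w x) * ‖gradient w x‖) * deriv (deriv f) (w x) * ‖gradient w x‖ ^ 2 +
          deriv (Hfun F) (deriv f (w x) * ‖gradient w x‖) / (deriv f (w x) * ‖gradient w x‖) *
            ((deriv f (w x)) ^ 3 * inftyLaplacian w x +
              (deriv f (w x)) ^ 2 * deriv (deriv f) (w x) * ‖gradient w x‖ ^ 4) := by
  intro x hx
  have hwx : ContDiffAt ℝ 2 w x := hw.contDiffAt (hD.mem_nhds hx)
  have hdf : Differentiable ℝ (deriv f) :=
    (hf.iterate_deriv' 1 1).differentiable one_ne_zero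
  have hb : 0 < ‖gradient w x‖ := norm_pos_iff.2 (hgrad x hx)
  have hab : 0 < deriv f (w x) * ‖gradient w x‖ := mul_pos (hf' _) hb
  have hH : DifferentiableAt ℝ (Hfun F) (deriv f (w x) * ‖gradient w x‖) :=
    differentiableAt_Hfun (hF.contDiffAt (Ici_mem_nhds hab)) hab.ne'
  have hfield : (fun y => Hfun F ‖gradient (f ∘ w) y‖ • gradient (f ∘ w) y) =ᶠ[𝓝 x]
      fun y => (Hfun F (deriv f (w y) * ‖gradient w y‖) * deriv f (w y)) • gradient w y := by
    filter_upwards [hD.mem_nhds hx] with y hy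
    have hwy := (hw.contDiffAt (hD.mem_nhds hy)).differentiableAt two_ne_zero
    rw [gradient_comp_of_differentiableAt (hf.differentiable two_ne_zero _) hwy, norm_smul,
      Real.norm_of_nonneg (hf' _).le, smul_smul]
  rw [hfield.divergence_eq,
    divergence_comp_mul_norm_gradient_mul_smul_gradient hwx (hgrad x hx) (hdf _) hH, hharm x hx]
  field_simp [hb.ne']
  ring

/-- For a harmonic function `w` with non-vanishing gradient in an open set
`D ⊆ ℝⁿ` (`n ≥ 2`), a `C²` function `f` with `f' > 0`, and `F` of class `C²` on `[0,∞)` with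
`F' > 0`, `F'' > 0` on `(0,∞)`, setting `H(t) = F'(t)/t`, at every point of `D` one has
`div(H(|∇(f∘w)|)∇(f∘w)) = H(f'(w)|∇w|) f''(w) |∇w|²
  + (H'(f'(w)|∇w|)/(f'(w)|∇w|)) [ (f'(w))³ Δ_∞ w + (f'(w))² f''(w) |∇w|⁴ ]`. -/
theorem statement0 {n : ℕ} (hn : 2 ≤ n)
    (D : Set (EuclideanSpace ℝ (Fin n))) (hD : IsOpen D)
    (w : EuclideanSpace ℝ (Fin n) → ℝ) (hw : ContDiffOn ℝ 2 w D)
    (hharm : ∀ x ∈ D, laplacian w x = 0)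
    (hgrad : ∀ x ∈ D, gradient w x ≠ 0)
    (f : ℝ → ℝ) (hf : ContDiff ℝ 2 f) (hf' : ∀ t : ℝ, 0 < deriv f t)
    (F : ℝ → ℝ) (hF : ContDiffOn ℝ 2 F (Ici 0))
    (hF' : ∀ t > (0:ℝ), 0 < deriv F t) (hF'' : ∀ t > (0:ℝ), 0 < deriv (deriv F) t) :
    ∀ x ∈ D,
      divergence (fun y => Hfun F ‖gradient (f ∘ w) y‖ • gradient (f ∘ w) y) x =
        Hfun F (deriv f (w x) * ‖gradient w x‖) * deriv (deriv f) (w x) * ‖gradient w x‖ ^ 2 +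
          deriv (Hfun F) (deriv f (w x) * ‖gradient w x‖) / (deriv f (w x) * ‖gradient w x‖) *
            ((deriv f (w x)) ^ 3 * inftyLaplacian w x +
              (deriv f (w x)) ^ 2 * deriv (deriv f) (w x) * ‖gradient w x‖ ^ 4) :=
  statement0_general D hD w hw hharm hgrad f hf hf' F hF
end
end

section
/- Let F : [0,∞) → ℝ be C² with F(0) = F'(0) = 0, F'' > 0 on (0,∞), and suppose h := F' is a strictly increasing bijection of [0,∞) onto [0,∞) with inverse g. Let ζ : [0,1] → [0,∞) be integrable and let α, β, m > 0. Define φ : [0,1] → ℝ by φ(w) = β⁻¹ · g( h(βm) · exp( (β/α) ∫_0^w ζ(τ) dτ ) ). Then φ(0) = m, φ is positive and monotone nondecreasing, and for all 0 ≤ w₁ ≤ w₂ ≤ 1 one has α ∫_{φ(w₁)}^{φ(w₂)} R(βs) ds = ∫_{w₁}^{w₂} ζ(w) dw, where R(t) = F''(t)/F'(t). -/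
/-!
Since `R = (log F')'`, substituting `t = β s` turns the integral equation into
`α/β · (log F'(β φ(w₂)) - log F'(β φ(w₁))) = ∫_{w₁}^{w₂} ζ`, i.e. into the requirement that
`log F'(β φ(w)) - (β/α) ∫_0^w ζ` be constant. The explicit `φ` makes this constant `log F'(β m)`,
and `φ` is monotone because `g`, the inverse of the increasing function `F'`, is.
-/

open Set Filter MeasureTheory
open scoped Topology
noncomputable section

/-- `R(t) = F''(t)/F'(t)`. -/
def Rfun (F : ℝ → ℝ) : ℝ → ℝ := fun t => deriv (deriv F) t / deriv F t

open Real intervalIntegral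

section LogDeriv

variable {F : ℝ → ℝ} {U : Set ℝ}

theorem hasDerivAt_log_deriv (hF : ContDiffOn ℝ 2 F U) (hU : IsOpen U) {t : ℝ} (ht : t ∈ U)
    (hne : deriv F t ≠ 0) : HasDerivAt (fun t => log (deriv F t)) (Rfun F t) t := by
  have hF' : ContDiffOn ℝ 1 (deriv F) U := hF.deriv_of_isOpen hU (by norm_num)
  exact ((hF'.contDiffAt (hU.mem_nhds ht)).differentiableAt one_ne_zero).hasDerivAt.log hne

theorem continuousOn_Rfun (hF : ContDiffOn ℝ 2 F U) (hU : IsOpen U) {s : Set ℝ} (hsU : s ⊆ U)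
    (hne : ∀ t ∈ s, deriv F t ≠ 0) : ContinuousOn (Rfun F) s := by
  have hF' : ContDiffOn ℝ 1 (deriv F) U := hF.deriv_of_isOpen hU (by norm_num)
  have hF'' : ContinuousOn (deriv (deriv F)) U :=
    (hF'.deriv_of_isOpen (m := 0) hU (by norm_num)).continuousOn
  exact (hF''.mono hsU).div (hF'.continuousOn.mono hsU) hne

theorem integral_Rfun_eq_log_sub (hF : ContDiffOn ℝ 2 F U) (hU : IsOpen U) {x y : ℝ}
    (hxy : uIcc x y ⊆ U) (hne : ∀ t ∈ uIcc x y, deriv F t ≠ 0) :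
    ∫ t in x..y, Rfun F t = log (deriv F y) - log (deriv F x) :=
  integral_eq_sub_of_hasDerivAt (fun t ht => hasDerivAt_log_deriv hF hU (hxy ht) (hne t ht))
    ((continuousOn_Rfun hF hU hxy hne).intervalIntegrable)

theorem smul_integral_Rfun_comp_mul (hF : ContDiffOn ℝ 2 F U) (hU : IsOpen U) {β a b : ℝ}
    (hab : uIcc (β * a) (β * b) ⊆ U) (hne : ∀ t ∈ uIcc (β * a) (β * b), deriv F t ≠ 0) :
    β * ∫ s in a..b, Rfun F (β * s) = log (deriv F (β * b)) - log (deriv F (β * a)) := by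
  rw [← smul_eq_mul, smul_integral_comp_mul_left, integral_Rfun_eq_log_sub hF hU hab hne]

theorem mul_integral_Rfun_comp_mul (hF : ContDiffOn ℝ 2 F (Ioi 0))
    (hF'pos : ∀ t > 0, 0 < deriv F t) (α : ℝ) {β a b : ℝ} (hβ : β ≠ 0) (ha : 0 < β * a)
    (hb : 0 < β * b) :
    α * ∫ s in a..b, Rfun F (β * s) = α / β * (log (deriv F (β * b)) - log (deriv F (β * a))) := by
  have hU : uIcc (β * a) (β * b) ⊆ Ioi 0 := ordConnected_Ioi.uIcc_subset ha hb
  rw [← smul_integral_Rfun_comp_mul hF isOpen_Ioi hU fun t ht => (hF'pos t (hU ht)).ne']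
  field_simp

end LogDeriv

theorem pos_of_rightInvOn_Ici {h g : ℝ → ℝ} (h0 : h 0 = 0)
    (hg : ∀ t ∈ Ici (0:ℝ), 0 ≤ g t ∧ h (g t) = t) {t : ℝ} (ht : 0 < t) : 0 < g t :=
  (hg t ht.le).1.lt_of_ne fun hgt => ht.ne (by rw [← (hg t ht.le).2, ← hgt, h0])

theorem MeasureTheory.IntegrableOn.intervalIntegrable_of_mem_Icc {E : Type*} [NormedAddCommGroup E]
    {μ : Measure ℝ} {f : ℝ → E} {a b x y : ℝ} (hf : IntegrableOn f (Icc a b) μ)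
    (hx : x ∈ Icc a b) (hy : y ∈ Icc a b) : IntervalIntegrable f μ x y :=
  (hf.mono_set (ordConnected_Icc.uIcc_subset hx hy)).intervalIntegrable

theorem monotoneOn_integral_of_nonneg {ζ : ℝ → ℝ} {a b : ℝ} (hζint : IntegrableOn ζ (Icc a b))
    (hζpos : ∀ w ∈ Icc a b, 0 ≤ ζ w) : MonotoneOn (fun w => ∫ τ in a..w, ζ τ) (Icc a b) := by
  intro x hx y hy hxy
  refine integral_mono_interval le_rfl hx.1 hxy ?_ ?_
  · exact ae_restrict_of_forall_mem measurableSet_Ioc fun w hw =>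
      hζpos w ⟨hw.1.le, hw.2.trans hy.2⟩
  · exact hζint.intervalIntegrable_of_mem_Icc (left_mem_Icc.2 (hx.1.trans hx.2)) hy

theorem statement5_general (F : ℝ → ℝ) (hF : ContDiffOn ℝ 2 F (Ici 0))
    (hF'0 : deriv F 0 = 0)
    (hmono : StrictMonoOn (deriv F) (Ici 0))
    (g : ℝ → ℝ)
    (hg1 : ∀ t ∈ Ici (0:ℝ), g (deriv F t) = t)
    (hg2 : ∀ t ∈ Ici (0:ℝ), 0 ≤ g t ∧ deriv F (g t) = t)
    (ζ : ℝ → ℝ) (hζint : IntegrableOn ζ (Icc 0 1))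
    (hζpos : ∀ w ∈ Icc (0:ℝ) 1, 0 ≤ ζ w)
    (α β m : ℝ) (hα : 0 < α) (hβ : 0 < β) (hm : 0 < m)
    (φ : ℝ → ℝ)
    (hφ : ∀ w : ℝ, φ w =
      β⁻¹ * g (deriv F (β * m) * Real.exp (β / α * ∫ τ in (0:ℝ)..w, ζ τ))) :
    φ 0 = m ∧ (∀ w ∈ Icc (0:ℝ) 1, 0 < φ w) ∧ MonotoneOn φ (Icc 0 1) ∧
      ∀ w₁ w₂ : ℝ, 0 ≤ w₁ → w₁ ≤ w₂ → w₂ ≤ 1 →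
        α * ∫ s in φ w₁..φ w₂, Rfun F (β * s) = ∫ w in w₁..w₂, ζ w := by
  set I : ℝ → ℝ := fun w => ∫ τ in (0:ℝ)..w, ζ τ
  have hF'pos : ∀ t > (0:ℝ), 0 < deriv F t := fun t ht => hF'0 ▸ hmono self_mem_Ici ht.le ht
  set c := deriv F (β * m)
  have hc : 0 < c := hF'pos _ (mul_pos hβ hm)
  have hE : ∀ w, 0 < c * exp (β / α * I w) := fun w => mul_pos hc (exp_pos _)
  have hβφ : ∀ w, β * φ w = g (c * exp (β / α * I w)) := fun w => by
    rw [hφ, mul_inv_cancel_left₀ hβ.ne']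
  have hF'φ : ∀ w, deriv F (β * φ w) = c * exp (β / α * I w) := fun w =>
    hβφ w ▸ (hg2 _ (hE w).le).2
  have hβφpos : ∀ w, 0 < β * φ w := fun w => hβφ w ▸ pos_of_rightInvOn_Ici hF'0 hg2 (hE w)
  have hlog : ∀ w, log (deriv F (β * φ w)) = log c + β / α * I w := fun w => by
    rw [hF'φ, log_mul hc.ne' (exp_pos _).ne', log_exp]
  have hζ : ∀ w ∈ Icc (0:ℝ) 1, IntervalIntegrable ζ volume 0 w :=
    fun w => hζint.intervalIntegrable_of_mem_Icc (left_mem_Icc.2 zero_le_one)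
  refine ⟨?_, fun w _ => pos_of_mul_pos_right (hβφpos w) hβ.le, ?_, ?_⟩
  · rw [hφ, integral_same, mul_zero, exp_zero, mul_one, hg1 _ (mul_pos hβ hm).le,
      inv_mul_cancel_left₀ hβ.ne']
  · have hgmono : MonotoneOn g (Ici 0) := Function.monotoneOn_of_rightInvOn_of_mapsTo
      hmono.monotoneOn (fun t ht => (hg2 t ht).2) (fun t ht => (hg2 t ht).1)
    intro x hx y hy hxy
    rw [hφ, hφ]
    refine mul_le_mul_of_nonneg_left (hgmono (hE x).le (hE y).le ?_) (by positivity)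
    have := monotoneOn_integral_of_nonneg hζint hζpos hx hy hxy
    gcongr
  · intro w₁ w₂ h0 h12 h1
    rw [mul_integral_Rfun_comp_mul (hF.mono Ioi_subset_Ici_self) hF'pos α hβ.ne' (hβφpos w₁)
      (hβφpos w₂), hlog, hlog, ← integral_interval_sub_left (hζ w₂ ⟨h0.trans h12, h1⟩)
      (hζ w₁ ⟨h0, h12.trans h1⟩)]
    field_simp
    ring

/-- Let `F` be `C²` on `[0,∞)` with `F(0) = F'(0) = 0`, `F'' > 0` on `(0,∞)`,
and let `h := F'` be a strictly increasing bijection of `[0,∞)` onto itself with inverse `g`.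
For integrable `ζ ≥ 0` on `[0,1]` and `α, β, m > 0`, the function
`φ(w) = β⁻¹ g( h(βm) exp( (β/α) ∫_0^w ζ ) )` satisfies `φ(0) = m`, `φ > 0`,
`φ` is monotone nondecreasing on `[0,1]`, and
`α ∫_{φ(w₁)}^{φ(w₂)} R(βs) ds = ∫_{w₁}^{w₂} ζ(w) dw` for all `0 ≤ w₁ ≤ w₂ ≤ 1`. -/
theorem statement5 (F : ℝ → ℝ) (hF : ContDiffOn ℝ 2 F (Ici 0))
    (hF0 : F 0 = 0) (hF'0 : deriv F 0 = 0)
    (hF'' : ∀ t > (0:ℝ), 0 < deriv (deriv F) t)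
    (hmono : StrictMonoOn (deriv F) (Ici 0))
    (g : ℝ → ℝ)
    (hg1 : ∀ t ∈ Ici (0:ℝ), g (deriv F t) = t)
    (hg2 : ∀ t ∈ Ici (0:ℝ), 0 ≤ g t ∧ deriv F (g t) = t)
    (ζ : ℝ → ℝ) (hζint : IntegrableOn ζ (Icc 0 1))
    (hζpos : ∀ w ∈ Icc (0:ℝ) 1, 0 ≤ ζ w)
    (α β m : ℝ) (hα : 0 < α) (hβ : 0 < β) (hm : 0 < m)
    (φ : ℝ → ℝ)
    (hφ : ∀ w : ℝ, φ w =
      β⁻¹ * g (deriv F (β * m) * Real.exp (β / α * ∫ τ in (0:ℝ)..w, ζ τ))) :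
    φ 0 = m ∧ (∀ w ∈ Icc (0:ℝ) 1, 0 < φ w) ∧ MonotoneOn φ (Icc 0 1) ∧
      ∀ w₁ w₂ : ℝ, 0 ≤ w₁ → w₁ ≤ w₂ → w₂ ≤ 1 →
        α * ∫ s in φ w₁..φ w₂, Rfun F (β * s) = ∫ w in w₁..w₂, ζ w :=
  statement5_general F hF hF'0 hmono g hg1 hg2 ζ hζint hζpos α β m hα hβ hm φ hφ
end
end

section
/- Let D ⊆ ℝⁿ be open, let F : [0,∞) → ℝ be convex and C¹ with F(0) = F'(0) = 0, set h = F' and H(t) = h(t)/t for t > 0 (with the flux field V(p) := H(|p|)p for p ≠ 0 and V(0) := 0). Let u, w : D → ℝ be locally Lipschitz with F(|∇u|), F(|∇w|), and |∇u| + |∇w| integrable on D, and suppose ∫_D F(|∇u|) dx ≤ ∫_D F(|∇(u + t(w−u))|) dx for every t ∈ [0,1]. Then ∫_D ⟨V(∇u), ∇(w − u)⟩ dx ≥ 0; equivalently, ∫_D H(|∇u|)⟨∇u, ∇(u − w)⟩ dx ≤ 0. -/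
/-!
Since `F` is convex with `F'(0) = 0`, it is nondecreasing on `[0, ∞)`, so `g(p) = F(|p|)` is convex;
it has gradient `V(p)` everywhere (at `p = 0` because `F'(0) = 0`). At each point, the difference
quotients `(g(∇u + t(∇w - ∇u)) - g(∇u)) / t` are monotone in `t ∈ (0, 1]`, hence squeezed between
`⟨V(∇u), ∇w - ∇u⟩` and `g(∇w) - g(∇u)`, and tend to the former as `t → 0⁺`. The minimality
hypothesis makes their integrals nonnegative, and dominated convergence passes this to the limit.
-/

open Set Filter MeasureTheory
open scoped RealInnerProductSpace Topology Classical
noncomputable section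

/-- The flux field `V(p) = H(|p|)p = (F'(|p|)/|p|) p` for `p ≠ 0`, `V(0) = 0`. -/
def flux {n : ℕ} (F : ℝ → ℝ) (p : EuclideanSpace ℝ (Fin n)) : EuclideanSpace ℝ (Fin n) :=
  if p = 0 then 0 else (deriv F ‖p‖ / ‖p‖) • p

theorem ConvexOn.monotoneOn_of_deriv_nonneg {F : ℝ → ℝ} (hF : ConvexOn ℝ (Ici 0) F)
    (hd : DifferentiableAt ℝ F 0) (h0 : 0 ≤ deriv F 0) : MonotoneOn F (Ici 0) := by
  intro x hx y hy hxy
  rcases hxy.eq_or_lt with rfl | hxy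
  · rfl
  have hslope : 0 ≤ slope F x y := by
    rcases (mem_Ici.1 hx).eq_or_lt with rfl | hx0
    · exact h0.trans (hF.deriv_le_slope self_mem_Ici hy hxy hd)
    · calc 0 ≤ slope F 0 x := h0.trans (hF.deriv_le_slope self_mem_Ici hx hx0 hd)
        _ = slope F x 0 := slope_comm F 0 x
        _ ≤ slope F x y :=
          hF.slope_mono hx ⟨self_mem_Ici, hx0.ne⟩ ⟨hy, hxy.ne'⟩ (hx0.trans hxy).le
  have h := sub_smul_slope F x y
  rw [smul_eq_mul, vsub_eq_sub] at h
  linarith [mul_nonneg (sub_nonneg.2 hxy.le) hslope]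

theorem convexOn_comp_norm {E : Type*} [NormedAddCommGroup E] [NormedSpace ℝ E] {F : ℝ → ℝ}
    (hF : ConvexOn ℝ (Ici 0) F) (hmono : MonotoneOn F (Ici 0)) :
    ConvexOn ℝ univ (fun p : E => F ‖p‖) := by
  refine ⟨convex_univ, fun p _ q _ a b ha hb hab => ?_⟩
  calc F ‖a • p + b • q‖ ≤ F (a * ‖p‖ + b * ‖q‖) :=
        hmono (norm_nonneg _) (mem_Ici.2 (by positivity))
          ((convexOn_norm convex_univ).2 trivial trivial ha hb hab)
    _ ≤ a • F ‖p‖ + b • F ‖q‖ := hF.2 (norm_nonneg _) (norm_nonneg _) ha hb hab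

section Gradient

variable {E : Type*} [NormedAddCommGroup E] [InnerProductSpace ℝ E] [CompleteSpace E]

theorem hasGradientAt_comp_norm_zero {F : ℝ → ℝ} (hF : HasDerivAt F 0 0) :
    HasGradientAt (fun q : E => F ‖q‖) 0 0 := by
  rw [hasGradientAt_iff_isLittleO_nhds_zero]
  have h := (hasDerivAt_iff_isLittleO_nhds_zero.1 hF).comp_tendsto (tendsto_norm_zero (E := E))
  exact Asymptotics.isLittleO_norm_right.1 (by simpa [Function.comp_def] using h)

theorem hasGradientAt_comp_norm {F : ℝ → ℝ} {p : E} (hp : p ≠ 0)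
    (hF : DifferentiableAt ℝ F ‖p‖) :
    HasGradientAt (fun q : E => F ‖q‖) ((deriv F ‖p‖ / ‖p‖) • p) p := by
  have hnorm : HasFDerivAt (fun q : E => ‖q‖) ((1 / (2 * ‖p‖)) • (2 • innerSL ℝ p)) p := by
    simpa [Real.sqrt_sq (norm_nonneg _)] using
      (hasStrictFDerivAt_norm_sq p).hasFDerivAt.sqrt (by positivity)
  rw [hasGradientAt_iff_hasFDerivAt]
  refine (hF.hasDerivAt.comp_hasFDerivAt p hnorm).congr_fderiv ?_
  ext q
  simp only [one_div, mul_inv_rev, smul_apply, coe_innerSL_apply,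
    nsmul_eq_mul, Nat.cast_ofNat, smul_eq_mul, map_smul, InnerProductSpace.toDual_apply_apply]
  field_simp

theorem HasGradientAt.hasDerivAt_add_smul {g : E → ℝ} {v p : E} (hg : HasGradientAt g v p)
    (c : E) : HasDerivAt (fun t : ℝ => g (p + t • c)) ⟪v, c⟫ 0 := by
  have hline : HasDerivAt (fun t : ℝ => p + t • c) c 0 := by
    simpa using ((hasDerivAt_id (0 : ℝ)).smul_const c).const_add p
  exact (hasGradientAt_iff_hasFDerivAt.1 hg).comp_hasDerivAt_of_eq 0 hline (by simp)

theorem gradient_add_mul_sub {u w : E → ℝ} {x : E} (hu : DifferentiableAt ℝ u x)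
    (hw : DifferentiableAt ℝ w x) (t : ℝ) :
    gradient (fun y => u y + t * (w y - u y)) x =
      gradient u x + t • (gradient w x - gradient u x) := by
  refine HasGradientAt.gradient ?_
  rw [hasGradientAt_iff_hasFDerivAt]
  exact (hu.hasFDerivAt.add ((hw.hasFDerivAt.sub hu.hasFDerivAt).const_mul t)).congr_fderiv
    (by simp [toDual_gradient])

theorem measurable_gradient [MeasurableSpace E] [BorelSpace E] (f : E → ℝ) :
    Measurable (gradient f) :=
  (InnerProductSpace.toDual ℝ E).symm.continuous.measurable.comp (measurable_fderiv ℝ f)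

end Gradient

theorem hasGradientAt_flux {n : ℕ} {F : ℝ → ℝ} {p : EuclideanSpace ℝ (Fin n)}
    (hF : DifferentiableAt ℝ F ‖p‖) (hF'0 : deriv F 0 = 0) :
    HasGradientAt (fun q => F ‖q‖) (flux F p) p := by
  rw [flux]
  split_ifs with hp
  · subst hp
    rw [norm_zero] at hF
    exact hasGradientAt_comp_norm_zero (hF.hasDerivAt.congr_deriv hF'0)
  · exact hasGradientAt_comp_norm hp hF

theorem ae_differentiableAt_of_lipschitzOnWith_nhds {E F : Type*} [NormedAddCommGroup E]
    [NormedSpace ℝ E] [FiniteDimensional ℝ E] [MeasurableSpace E] [BorelSpace E]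
    [NormedAddCommGroup F] [NormedSpace ℝ F] [FiniteDimensional ℝ F]
    (μ : Measure E) [μ.IsAddHaarMeasure] {f : E → F} {D : Set E}
    (hf : ∀ x ∈ D, ∃ K, ∃ s ∈ 𝓝 x, LipschitzOnWith K f s) :
    ∀ᵐ x ∂μ.restrict D, DifferentiableAt ℝ f x := by
  rw [ae_restrict_iff (measurableSet_of_differentiableAt ℝ f), ae_iff]
  refine measure_null_of_locally_null _ fun x hx => ?_
  obtain ⟨K, s, hs, hlip⟩ := hf x (Classical.not_imp.1 hx).1
  refine ⟨_, inter_mem_nhdsWithin _ (interior_mem_nhds.2 hs), measure_mono_null ?_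
    (ae_iff.1 ((hlip.mono interior_subset).ae_differentiableWithinAt_of_mem (μ := μ)))⟩
  rintro y ⟨hyD, hy⟩ hdiff
  exact hyD fun _ => (hdiff hy).differentiableAt (isOpen_interior.mem_nhds hy)

theorem ConvexOn.le_slope_le_of_hasDerivAt {φ : ℝ → ℝ} {d t : ℝ} (hφ : ConvexOn ℝ univ φ)
    (hd : HasDerivAt φ d 0) (ht : t ∈ Ioc (0 : ℝ) 1) :
    d ≤ slope φ 0 t ∧ slope φ 0 t ≤ φ 1 - φ 0 := by
  refine ⟨hφ.le_slope_of_hasDerivAt trivial trivial ht.1 hd, ?_⟩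
  simpa [slope_def_field] using
    hφ.slope_mono trivial ⟨trivial, ht.1.ne'⟩ ⟨trivial, one_ne_zero⟩ ht.2

section FirstVariation

variable {α E : Type*} [MeasurableSpace α] {μ : Measure α} [NormedAddCommGroup E]
  [InnerProductSpace ℝ E] {g : E → ℝ}

theorem aestronglyMeasurable_slope_add_smul (hg : Continuous g) {a b : α → E}
    (ha : AEStronglyMeasurable a μ) (hb : AEStronglyMeasurable b μ) (t : ℝ) :
    AEStronglyMeasurable (fun x => slope (fun s => g (a x + s • (b x - a x))) 0 t) μ := by
  simp only [slope, vsub_eq_sub]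
  exact ((hg.comp_aestronglyMeasurable (ha.add ((hb.sub ha).const_smul t))).sub
    (hg.comp_aestronglyMeasurable (by simpa using ha))).const_smul (t - 0)⁻¹

variable [CompleteSpace E]

theorem ConvexOn.inner_le_slope_le {v p : E} (hg : ConvexOn ℝ univ g)
    (hG : HasGradientAt g v p) (q : E) {t : ℝ} (ht : t ∈ Ioc (0 : ℝ) 1) :
    ⟪v, q - p⟫ ≤ slope (fun s => g (p + s • (q - p))) 0 t ∧
      slope (fun s => g (p + s • (q - p))) 0 t ≤ g q - g p := by
  have hconv : ConvexOn ℝ univ fun s : ℝ => g (p + s • (q - p)) := by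
    simpa [Function.comp_def, AffineMap.lineMap_apply, add_comm] using
      hg.comp_affineMap (AffineMap.lineMap p q)
  simpa using hconv.le_slope_le_of_hasDerivAt (hG.hasDerivAt_add_smul _) ht

theorem integral_inner_gradient_nonneg_of_le_integral_add_smul
    {G : E → E} (hg : ConvexOn ℝ univ g) (hG : ∀ p, HasGradientAt g (G p) p) {a b : α → E}
    (ha : AEStronglyMeasurable a μ) (hb : AEStronglyMeasurable b μ)
    (hga : Integrable (fun x => g (a x)) μ) (hgb : Integrable (fun x => g (b x)) μ)
    (hmin : ∀ t ∈ Ioc (0 : ℝ) 1, ∫ x, g (a x) ∂μ ≤ ∫ x, g (a x + t • (b x - a x)) ∂μ) :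
    0 ≤ ∫ x, ⟪G (a x), b x - a x⟫ ∂μ := by
  by_cases hint : Integrable (fun x => ⟪G (a x), b x - a x⟫) μ
  swap
  · rw [integral_undef hint]
  set Q : ℝ → α → ℝ := fun t x => slope (fun s => g (a x + s • (b x - a x))) 0 t
  have hQ_meas : ∀ t, AEStronglyMeasurable (Q t) μ := fun t =>
    aestronglyMeasurable_slope_add_smul
      (continuous_iff_continuousAt.2 fun p => (hG p).differentiableAt.continuousAt) ha hb t
  set bound := fun x => |⟪G (a x), b x - a x⟫| + |g (b x) - g (a x)|
  have hbound : Integrable bound μ := hint.abs.add (hgb.sub hga).abs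
  have hQ_le : ∀ t ∈ Ioc (0 : ℝ) 1, ∀ x, ‖Q t x‖ ≤ bound x := by
    intro t ht x
    obtain ⟨hlo, hhi⟩ := hg.inner_le_slope_le (hG (a x)) (b x) ht
    exact (abs_le_max_abs_abs hlo hhi).trans (max_le_add_of_nonneg (abs_nonneg _) (abs_nonneg _))
  have hQ_nonneg : ∀ t ∈ Ioc (0 : ℝ) 1, 0 ≤ ∫ x, Q t x ∂μ := by
    intro t ht
    have hQ_int : Integrable (Q t) μ := hbound.mono' (hQ_meas t) (.of_forall (hQ_le t ht))
    have hsplit : ∀ x, g (a x + t • (b x - a x)) = g (a x) + t * Q t x := by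
      intro x
      have h := sub_smul_slope (fun s => g (a x + s • (b x - a x))) 0 t
      simp only [sub_zero, smul_eq_mul, zero_smul, add_zero, vsub_eq_sub] at h
      simp only [Q]
      linarith
    have h := hmin t ht
    rw [integral_congr_ae (.of_forall hsplit), integral_add hga (hQ_int.const_mul t),
      integral_const_mul] at h
    exact nonneg_of_mul_nonneg_right (by linarith) ht.1
  have hlim : Tendsto (fun t => ∫ x, Q t x ∂μ) (𝓝[>] 0)
      (𝓝 (∫ x, ⟪G (a x), b x - a x⟫ ∂μ)) := by
    refine tendsto_integral_filter_of_dominated_convergence bound (.of_forall hQ_meas) ?_ hbound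
      (.of_forall fun x => ?_)
    · filter_upwards [Ioc_mem_nhdsGT zero_lt_one] with t ht using .of_forall (hQ_le t ht)
    · exact (hasDerivAt_iff_tendsto_slope.1 ((hG (a x)).hasDerivAt_add_smul _)).mono_left
        (nhdsGT_le_nhdsNE 0)
  refine ge_of_tendsto hlim ?_
  filter_upwards [Ioc_mem_nhdsGT zero_lt_one] using hQ_nonneg

end FirstVariation

theorem statement11_general {n : ℕ} (D : Set (EuclideanSpace ℝ (Fin n)))
    (F : ℝ → ℝ) (hFconv : ConvexOn ℝ (Ici 0) F)
    (hFdiff : ∀ t ∈ Ici (0:ℝ), DifferentiableAt ℝ F t)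
    (hF'0 : deriv F 0 = 0)
    (u w : EuclideanSpace ℝ (Fin n) → ℝ)
    (hu_lip : ∀ x ∈ D, ∃ K : NNReal, ∃ s ∈ 𝓝 x, LipschitzOnWith K u s)
    (hw_lip : ∀ x ∈ D, ∃ K : NNReal, ∃ s ∈ 𝓝 x, LipschitzOnWith K w s)
    (hFu_int : IntegrableOn (fun x => F ‖gradient u x‖) D)
    (hFw_int : IntegrableOn (fun x => F ‖gradient w x‖) D)
    (hmin : ∀ t ∈ Icc (0:ℝ) 1,
      ∫ x in D, F ‖gradient u x‖ ≤
        ∫ x in D, F ‖gradient (fun y => u y + t * (w y - u y)) x‖) :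
    0 ≤ (∫ x in D, ⟪flux F (gradient u x), gradient w x - gradient u x⟫) ∧
      (∫ x in D, ⟪flux F (gradient u x), gradient u x - gradient w x⟫) ≤ 0 := by
  have hmono := hFconv.monotoneOn_of_deriv_nonneg (hFdiff 0 self_mem_Ici) hF'0.ge
  have hdiff := (ae_differentiableAt_of_lipschitzOnWith_nhds volume hu_lip).and
    (ae_differentiableAt_of_lipschitzOnWith_nhds volume hw_lip)
  have hnonneg : 0 ≤ ∫ x in D, ⟪flux F (gradient u x), gradient w x - gradient u x⟫ := by
    refine integral_inner_gradient_nonneg_of_le_integral_add_smul (convexOn_comp_norm hFconv hmono)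
      (fun p => hasGradientAt_flux (hFdiff _ (norm_nonneg p)) hF'0)
      (measurable_gradient u).aestronglyMeasurable (measurable_gradient w).aestronglyMeasurable
      hFu_int hFw_int fun t ht => (hmin t (Ioc_subset_Icc_self ht)).trans_eq ?_
    refine integral_congr_ae ?_
    filter_upwards [hdiff] with x ⟨hux, hwx⟩
    rw [gradient_add_mul_sub hux hwx]
  refine ⟨hnonneg, ?_⟩
  simpa only [← neg_sub (gradient w _), inner_neg_right, integral_neg, neg_nonpos] using hnonneg

/-- (First-variation inequality.) Let `D ⊆ ℝⁿ` be open, `F` convex and `C¹`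
on `[0,∞)` with `F(0) = F'(0) = 0`, `h = F'`, `H(t) = h(t)/t`, `V(p) = H(|p|)p` (`V(0) = 0`).
If `u, w` are locally Lipschitz on `D` with `F(|∇u|)`, `F(|∇w|)`, `|∇u| + |∇w|` integrable
on `D`, and `∫_D F(|∇u|) ≤ ∫_D F(|∇(u + t(w−u))|)` for every `t ∈ [0,1]`, then
`∫_D ⟨V(∇u), ∇(w−u)⟩ ≥ 0`; equivalently `∫_D H(|∇u|)⟨∇u, ∇(u−w)⟩ ≤ 0`. -/
theorem statement11 {n : ℕ} (D : Set (EuclideanSpace ℝ (Fin n))) (hD : IsOpen D)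
    (F : ℝ → ℝ) (hFconv : ConvexOn ℝ (Ici 0) F)
    (hFdiff : ∀ t ∈ Ici (0:ℝ), DifferentiableAt ℝ F t)
    (hF0 : F 0 = 0) (hF'0 : deriv F 0 = 0)
    (u w : EuclideanSpace ℝ (Fin n) → ℝ)
    (hu_lip : ∀ x ∈ D, ∃ K : NNReal, ∃ s ∈ 𝓝 x, LipschitzOnWith K u s)
    (hw_lip : ∀ x ∈ D, ∃ K : NNReal, ∃ s ∈ 𝓝 x, LipschitzOnWith K w s)
    (hFu_int : IntegrableOn (fun x => F ‖gradient u x‖) D)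
    (hFw_int : IntegrableOn (fun x => F ‖gradient w x‖) D)
    (hgrad_int : IntegrableOn (fun x => ‖gradient u x‖ + ‖gradient w x‖) D)
    (hmin : ∀ t ∈ Icc (0:ℝ) 1,
      ∫ x in D, F ‖gradient u x‖ ≤
        ∫ x in D, F ‖gradient (fun y => u y + t * (w y - u y)) x‖) :
    0 ≤ (∫ x in D, ⟪flux F (gradient u x), gradient w x - gradient u x⟫) ∧
      (∫ x in D, ⟪flux F (gradient u x), gradient u x - gradient w x⟫) ≤ 0 :=
  statement11_general D F hFconv hFdiff hF'0 u w hu_lip hw_lip hFu_int hFw_int hmin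
end
end
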